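/- Let G be the group with presentation ⟨a, b, t | t a t⁻¹ = a b, t b t⁻¹ = b a b⟩ and let ι : F₂ → G be the homomorphism sending the free generators u, v to a, b respectively. For every natural number n there exists w_n ∈ F₂ with ι(w_n) = tⁿ a t⁻ⁿ; moreover every w ∈ F₂ with ι(w) = tⁿ a t⁻ⁿ has reduced word length |w| ≥ 2ⁿ in the basis {u, v}, while the word length of tⁿ a t⁻ⁿ in G with respect to the generating set {a, b, t} is at most 2n + 1. -/

import Mathlib

/-!
Conjugation by `t` acts on `⟨a, b⟩` as the monodromy `φ : u ↦ uv, v ↦ vuv` of `F₂`, so the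
relations of `G` hold in the mapping torus `F₂ ⋊_φ ℤ` under `a, b, t ↦ u, v, φ`. The resulting
map `G → F₂ ⋊_φ ℤ` restricts to the identity on `F₂`, so `ι` is injective and the only preimage
of `tⁿ a t⁻ⁿ` is `φⁿ(u)`. The exponent sums `(eₙ, fₙ)` of
`(φⁿ(u), φⁿ(v))` obey `eₙ₊₁ = eₙ + fₙ`, `fₙ₊₁ = eₙ + 2fₙ`, so `eₙ ≥ 2ⁿ`, and a reduced word is
at least as long as its exponent sum.
-/

/-- The relations `t a t⁻¹ = a b` and `t b t⁻¹ = b a b` of the figure-eight knot group,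
with generators `a, b, t` encoded as `0, 1, 2 : Fin 3`. -/
def fig8Rels : Set (FreeGroup (Fin 3)) :=
  {FreeGroup.of 2 * FreeGroup.of 0 * (FreeGroup.of 2)⁻¹ *
      (FreeGroup.of 0 * FreeGroup.of 1)⁻¹,
   FreeGroup.of 2 * FreeGroup.of 1 * (FreeGroup.of 2)⁻¹ *
      (FreeGroup.of 1 * FreeGroup.of 0 * FreeGroup.of 1)⁻¹}

/-- The fundamental group of the figure-eight knot complement,
`⟨a, b, t | t a t⁻¹ = a b, t b t⁻¹ = b a b⟩`. -/
abbrev Fig8 : Type := PresentedGroup fig8Rels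

/-- The generator `a` of the figure-eight knot group. -/
def fig8a : Fig8 := PresentedGroup.of 0

/-- The generator `b` of the figure-eight knot group. -/
def fig8b : Fig8 := PresentedGroup.of 1

/-- The generator `t` of the figure-eight knot group. -/
def fig8t : Fig8 := PresentedGroup.of 2

/-- The homomorphism `F₂ → G` sending the free generators `u, v` to `a, b`. -/
def fig8iota : FreeGroup (Fin 2) →* Fig8 := FreeGroup.lift ![fig8a, fig8b]


/-- The word length of `g` with respect to a generating set `S`: the minimal length of a
word in the elements of `S` and their inverses representing `g`. -/
noncomputable def wordLength {G : Type*} [Group G] (S : Set G) (g : G) : ℕ :=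
  sInf {n | ∃ l : List G, l.length = n ∧ (∀ x ∈ l, x ∈ S ∨ x⁻¹ ∈ S) ∧ l.prod = g}

namespace FreeGroup

variable {α : Type*}

def exponentSum : FreeGroup α →* Multiplicative ℤ :=
  FreeGroup.lift fun _ => Multiplicative.ofAdd 1

@[simp]
theorem exponentSum_of (a : α) : (exponentSum (of a)).toAdd = 1 := by
  simp [exponentSum]

theorem natAbs_exponentSum_mk_le (L : List (α × Bool)) :
    (exponentSum (mk L)).toAdd.natAbs ≤ L.length := by
  induction L with
  | nil => rfl
  | cons x L ih =>
    rw [← List.singleton_append, ← mul_mk, _root_.map_mul, toAdd_mul, List.length_append]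
    have hx : (exponentSum (mk [x])).toAdd.natAbs ≤ 1 := by
      obtain ⟨a, _ | _⟩ := x <;> simp [exponentSum, lift_mk]
    exact (Int.natAbs_add_le _ _).trans (by simp only [List.length_singleton]; omega)

theorem natAbs_exponentSum_le_norm [DecidableEq α] (w : FreeGroup α) :
    (exponentSum w).toAdd.natAbs ≤ w.norm := by
  have h := natAbs_exponentSum_mk_le w.toWord
  rwa [mk_toWord] at h

end FreeGroup

section WordLength

variable {G : Type*} [Group G] {S : Set G}

theorem wordLength_le_length {g : G} (l : List G) (hl : ∀ x ∈ l, x ∈ S ∨ x⁻¹ ∈ S)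
    (hg : l.prod = g) : wordLength S g ≤ l.length :=
  Nat.sInf_le ⟨l, rfl, hl, hg⟩

theorem wordLength_conj_pow_le {s x : G} (hs : s ∈ S) (hx : x ∈ S) (n : ℕ) :
    wordLength S (s ^ n * x * (s ^ n)⁻¹) ≤ 2 * n + 1 := by
  refine (wordLength_le_length (List.replicate n s ++ [x] ++ List.replicate n s⁻¹)
    ?_ ?_).trans ?_
  · intro y hy
    simp only [List.mem_append, List.mem_replicate, List.mem_singleton] at hy
    rcases hy with (⟨-, rfl⟩ | rfl) | ⟨-, rfl⟩
    · exact .inl hs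
    · exact .inl hx
    · exact .inr (by rwa [inv_inv])
  · simp [List.prod_replicate, inv_pow, mul_assoc]
  · simp only [List.length_append, List.length_replicate, List.length_singleton]; omega

end WordLength

namespace SemidirectProduct

variable {N : Type*} [Group N]

theorem inr_ofAdd_mul_inl_mul_inv (Φ : MulAut N) (n : ℕ) (x : N) :
    (inr (.ofAdd (n : ℤ)) : N ⋊[zpowersHom _ Φ] Multiplicative ℤ) * inl x *
      (inr (.ofAdd (n : ℤ)))⁻¹ = inl ((Φ ^ n) x) := by
  rw [← map_inv, ← inl_aut, zpowersHom_apply, toAdd_ofAdd, zpow_natCast]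

end SemidirectProduct

namespace Fig8

open FreeGroup SemidirectProduct

def u : FreeGroup (Fin 2) := of 0
def v : FreeGroup (Fin 2) := of 1

@[simp] theorem fig8iota_u : fig8iota u = fig8a := by simp [fig8iota, u]
@[simp] theorem fig8iota_v : fig8iota v = fig8b := by simp [fig8iota, v]

def monodromyHom : FreeGroup (Fin 2) →* FreeGroup (Fin 2) := lift ![u * v, v * u * v]
def monodromyInvHom : FreeGroup (Fin 2) →* FreeGroup (Fin 2) := lift ![u * u * v⁻¹, v * u⁻¹]

@[simp] theorem monodromyHom_u : monodromyHom u = u * v := by simp [monodromyHom, u]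
@[simp] theorem monodromyHom_v : monodromyHom v = v * u * v := by simp [monodromyHom, u, v]
@[simp] theorem monodromyInvHom_u : monodromyInvHom u = u * u * v⁻¹ := by
  simp [monodromyInvHom, u]
@[simp] theorem monodromyInvHom_v : monodromyInvHom v = v * u⁻¹ := by
  simp [monodromyInvHom, u, v]

theorem hom_ext_uv {H : Type*} [Group H] {f g : FreeGroup (Fin 2) →* H}
    (hu : f u = g u) (hv : f v = g v) : f = g :=
  ext_hom _ _ fun i => by fin_cases i; exacts [hu, hv]

theorem monodromyInvHom_comp_monodromyHom :
    monodromyInvHom.comp monodromyHom = MonoidHom.id _ := by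
  refine hom_ext_uv ?_ ?_ <;>
    simp only [MonoidHom.comp_apply, MonoidHom.id_apply, monodromyHom_u, monodromyHom_v,
      monodromyInvHom_u, monodromyInvHom_v, _root_.map_mul] <;> group

theorem monodromyHom_comp_monodromyInvHom :
    monodromyHom.comp monodromyInvHom = MonoidHom.id _ := by
  refine hom_ext_uv ?_ ?_ <;>
    simp only [MonoidHom.comp_apply, MonoidHom.id_apply, monodromyHom_u, monodromyHom_v,
      monodromyInvHom_u, monodromyInvHom_v, _root_.map_mul, _root_.map_inv] <;> group

def monodromy : MulAut (FreeGroup (Fin 2)) :=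
  monodromyHom.toMulEquiv monodromyInvHom monodromyInvHom_comp_monodromyHom
    monodromyHom_comp_monodromyInvHom

@[simp]
theorem monodromy_apply (w : FreeGroup (Fin 2)) : monodromy w = monodromyHom w := rfl

theorem monodromy_pow_succ_apply (n : ℕ) (w : FreeGroup (Fin 2)) :
    (monodromy ^ (n + 1)) w = (monodromy ^ n) (monodromyHom w) := by
  rw [pow_succ]; rfl

theorem t_mul_a_mul_t_inv : fig8t * fig8a * fig8t⁻¹ = fig8a * fig8b := by
  have h := PresentedGroup.mk_eq_mk_of_mul_inv_mem (rels := fig8Rels) (Set.mem_insert _ _)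
  simp only [_root_.map_mul] at h
  exact h

theorem t_mul_b_mul_t_inv : fig8t * fig8b * fig8t⁻¹ = fig8b * fig8a * fig8b := by
  have h := PresentedGroup.mk_eq_mk_of_mul_inv_mem (rels := fig8Rels) (Set.mem_insert_of_mem _ rfl)
  simp only [_root_.map_mul] at h
  exact h

theorem fig8iota_monodromy (w : FreeGroup (Fin 2)) :
    fig8iota (monodromy w) = fig8t * fig8iota w * fig8t⁻¹ := by
  have h : fig8iota.comp monodromyHom = (MulAut.conj fig8t).toMonoidHom.comp fig8iota :=
    hom_ext_uv (by simp [t_mul_a_mul_t_inv]) (by simp [t_mul_b_mul_t_inv])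
  exact DFunLike.congr_fun h w

theorem fig8iota_monodromy_pow (n : ℕ) (w : FreeGroup (Fin 2)) :
    fig8iota ((monodromy ^ n) w) = fig8t ^ n * fig8iota w * (fig8t ^ n)⁻¹ := by
  induction n generalizing w with
  | zero => simp
  | succ n ih =>
    rw [monodromy_pow_succ_apply, ih, ← monodromy_apply, fig8iota_monodromy]
    group

abbrev MappingTorus := FreeGroup (Fin 2) ⋊[zpowersHom _ monodromy] Multiplicative ℤ

theorem rels_hold_in_mappingTorus :
    ∀ r ∈ fig8Rels, lift ![(inl u : MappingTorus), inl v, inr (.ofAdd 1)] r = 1 := by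
  have hconj (x : FreeGroup (Fin 2)) :
      (inr (.ofAdd 1) : MappingTorus) * inl x * (inr (.ofAdd 1))⁻¹ = inl (monodromyHom x) := by
    simpa using inr_ofAdd_mul_inl_mul_inv monodromy 1 x
  rintro r (rfl | rfl) <;>
    simp only [_root_.map_mul, _root_.map_inv, lift_apply_of, Matrix.cons_val_zero,
      Matrix.cons_val_one, Matrix.cons_val_two, Matrix.head_cons, Matrix.tail_cons, hconj,
      mul_inv_eq_one] <;> simp [← _root_.map_mul]

def toMappingTorus : Fig8 →* MappingTorus := PresentedGroup.toGroup rels_hold_in_mappingTorus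

theorem toMappingTorus_fig8iota (w : FreeGroup (Fin 2)) : toMappingTorus (fig8iota w) = inl w := by
  have h : toMappingTorus.comp fig8iota = inl :=
    hom_ext_uv (PresentedGroup.toGroup.of rels_hold_in_mappingTorus)
      (PresentedGroup.toGroup.of rels_hold_in_mappingTorus)
  exact DFunLike.congr_fun h w

theorem fig8iota_injective : Function.Injective fig8iota := fun w w' h =>
  inl_injective (by rw [← toMappingTorus_fig8iota, h, toMappingTorus_fig8iota])

theorem exponentSum_monodromy_pow (n : ℕ) :
    2 ^ n ≤ (exponentSum ((monodromy ^ n) u)).toAdd ∧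
      (exponentSum ((monodromy ^ n) u)).toAdd ≤ (exponentSum ((monodromy ^ n) v)).toAdd := by
  induction n with
  | zero => simp [u, v]
  | succ n ih =>
    simp only [monodromy_pow_succ_apply, monodromyHom_u, monodromyHom_v, _root_.map_mul,
      toAdd_mul]
    constructor <;> linarith [pow_succ (2 : ℤ) n, pow_pos (two_pos (α := ℤ)) n]

end Fig8

open Fig8 FreeGroup in
/-- `tⁿ a t⁻ⁿ` lies in the subgroup `⟨a, b⟩`, every word in `u, v` mapping to it has
reduced length at least `2ⁿ`, while its word length in `G` over `{a, b, t}` is at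
most `2n + 1`. -/
theorem fig8_distortion (n : ℕ) :
    (∃ w : FreeGroup (Fin 2), fig8iota w = fig8t ^ n * fig8a * (fig8t ^ n)⁻¹) ∧
    (∀ w : FreeGroup (Fin 2), fig8iota w = fig8t ^ n * fig8a * (fig8t ^ n)⁻¹ →
      2 ^ n ≤ w.toWord.length) ∧
    wordLength ({fig8a, fig8b, fig8t} : Set Fig8)
      (fig8t ^ n * fig8a * (fig8t ^ n)⁻¹) ≤ 2 * n + 1 := by
  have himage : fig8iota ((monodromy ^ n) u) = fig8t ^ n * fig8a * (fig8t ^ n)⁻¹ := by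
    rw [fig8iota_monodromy_pow, fig8iota_u]
  refine ⟨⟨_, himage⟩, fun w hw => ?_, wordLength_conj_pow_le (by simp) (by simp) n⟩
  obtain rfl := fig8iota_injective (hw.trans himage.symm)
  calc 2 ^ n ≤ (exponentSum ((monodromy ^ n) u)).toAdd.natAbs := by
        exact_mod_cast (exponentSum_monodromy_pow n).1.trans Int.le_natAbs
    _ ≤ ((monodromy ^ n) u).norm := natAbs_exponentSum_le_norm _
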